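/- arXiv:1112.5657 — 5 statements merged into one kernel-verified Lean document; each statement's English description precedes it below -/
import Mathlib

section
/- For each j with 0 ≤ j ≤ n-1, the alternating-block vector 𝟙_{n,j} is an eigenvector of the Hamming cube distance matrix D_n with eigenvalue -2^{n-1}. -/
/-- Hamming (ℓ¹) distance between the n-digit binary representations of i and j. -/
noncomputable def cubeDist (n : ℕ) (i j : Fin (2 ^ n)) : ℝ :=
  ∑ k ∈ Finset.range n, if i.val.testBit k = j.val.testBit k then 0 else 1

/-- The 2^n × 2^n distance matrix of the n-dimensional Hamming cube. -/
noncomputable def Dmat (n : ℕ) : Matrix (Fin (2 ^ n)) (Fin (2 ^ n)) ℝ :=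
  Matrix.of fun i j => cubeDist n i j

/-- The vector 𝟙_{n,j} : alternating blocks of 2^j ones and 2^j negative ones. -/
def oneVec (n j : ℕ) : Fin (2 ^ n) → ℝ := fun i => if i.val.testBit j then -1 else 1

theorem stmt2 (n : ℕ) (j : ℕ) (hj : j < n) :
    (Dmat n).mulVec (oneVec n j) = (-(2 ^ (n - 1)) : ℝ) • oneVec n j := by
  funext i
  -- the flip map
  set g : Fin (2 ^ n) → Fin (2 ^ n) := fun x =>
    ⟨x.val ^^^ 2 ^ j, Nat.xor_lt_two_pow x.isLt (Nat.pow_lt_pow_right one_lt_two hj)⟩ with hg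
  have hgbit : ∀ (x : Fin (2 ^ n)) (k : ℕ),
      (g x).val.testBit k = (x.val.testBit k ^^ decide (j = k)) := by
    intro x k
    simp [hg, Nat.testBit_xor, Nat.testBit_two_pow]
  have hgg : Function.Involutive g := by
    intro x
    apply Fin.ext
    simp [hg, Nat.xor_assoc]
  set T : Fin (2 ^ n) → ℝ := fun x => cubeDist n i x * oneVec n j x with hT
  have hpair : ∀ x, T x + T (g x) = -(oneVec n j i) := by
    intro x
    have hdx : cubeDist n i x = (∑ k ∈ Finset.range n \ {j},
        if i.val.testBit k = x.val.testBit k then (0:ℝ) else 1) +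
        (if i.val.testBit j = x.val.testBit j then (0:ℝ) else 1) :=
      Finset.sum_eq_sum_sdiff_singleton_add (Finset.mem_range.mpr hj) _
    have hdgx : cubeDist n i (g x) = (∑ k ∈ Finset.range n \ {j},
        if i.val.testBit k = x.val.testBit k then (0:ℝ) else 1) +
        (if i.val.testBit j = !(x.val.testBit j) then (0:ℝ) else 1) := by
      rw [cubeDist, Finset.sum_eq_sum_sdiff_singleton_add (Finset.mem_range.mpr hj)]
      congr 1
      · apply Finset.sum_congr rfl
        intro k hk
        have hkj : j ≠ k := by
          intro h; subst h; simp at hk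
        rw [hgbit x k]
        simp [hkj]
      · rw [hgbit x j]; simp
    have hov : oneVec n j (g x) = -(oneVec n j x) := by
      rw [oneVec, oneVec, hgbit x j]
      cases x.val.testBit j <;> simp
    show cubeDist n i x * oneVec n j x + cubeDist n i (g x) * oneVec n j (g x) = -(oneVec n j i)
    rw [hdx, hdgx, hov, oneVec, oneVec]
    cases hb : i.val.testBit j <;> cases hc : x.val.testBit j <;> simp
  have hsum : ∑ x, T (g x) = ∑ x, T x := hgg.bijective.sum_comp T
  have htotal : (2:ℝ) * ∑ x, T x = (2 ^ n : ℝ) * (-(oneVec n j i)) := by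
    have : ∑ x : Fin (2 ^ n), (T x + T (g x)) = ∑ _x : Fin (2 ^ n), -(oneVec n j i) :=
      Finset.sum_congr rfl (fun x _ => hpair x)
    rw [Finset.sum_add_distrib, hsum] at this
    rw [two_mul, this]
    simp [mul_comm]
  have hmv : (Dmat n).mulVec (oneVec n j) i = ∑ x, T x := by
    simp [Matrix.mulVec, dotProduct, Dmat, hT]
  rw [hmv, Pi.smul_apply, smul_eq_mul]
  have hpow : (2:ℝ) ^ n = 2 * 2 ^ (n - 1) := by
    rw [← pow_succ']
    congr 1
    omega
  rw [hpow] at htotal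
  nlinarith [htotal]
end

section
/- Let x_0, x_1, ..., x_k be distinct points of the Hamming cube {0,1}^n ⊂ ℝ^n. There exists a nonzero vector (η_0, ..., η_k) ∈ ℝ^{k+1} with Σ η_i = 0 and Σ_{i,j} ‖x_i - x_j‖₁ η_i η_j = 0 if and only if the vectors x_1 - x_0, x_2 - x_0, ..., x_k - x_0 are linearly dependent in ℝ^n. -/
lemma quad_eq (m : ℕ) (a η : Fin m → ℝ) (hs : ∑ i, η i = 0) :
    ∑ i, ∑ j, (a i - a j)^2 * η i * η j = -2 * (∑ i, η i * a i)^2 := by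
  have h1 : ∑ i, ∑ j, (a i - a j)^2 * η i * η j
      = ∑ i, ∑ j, ((a i^2 * η i) * η j + η i * (a j^2 * η j)
          - 2 * ((η i * a i) * (η j * a j))) := by
    refine Finset.sum_congr rfl fun i _ => Finset.sum_congr rfl fun j _ => ?_
    ring
  rw [h1]
  simp only [Finset.sum_add_distrib, Finset.sum_sub_distrib, ← Finset.mul_sum,
    ← Finset.sum_mul, hs, mul_zero, zero_mul, Finset.sum_const_zero, zero_add, zero_sub]
  rw [sq]
  ring

theorem stmt12 (n k : ℕ) (x : Fin (k + 1) → (Fin n → ℝ))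
    (hcube : ∀ i t, x i t = 0 ∨ x i t = 1)
    (hinj : Function.Injective x) :
    (∃ η : Fin (k + 1) → ℝ, η ≠ 0 ∧ (∑ i, η i) = 0 ∧
        (∑ i, ∑ j, (∑ t, |x i t - x j t|) * η i * η j) = 0) ↔
      ¬ LinearIndependent ℝ (fun i : Fin k => x i.succ - x 0) := by
  have habs : ∀ i j, (∑ t, |x i t - x j t|) = ∑ t, (x i t - x j t)^2 := by
    intro i j
    refine Finset.sum_congr rfl fun t _ => ?_
    rcases hcube i t with h1 | h1 <;> rcases hcube j t with h2 | h2 <;>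
      rw [h1, h2] <;> norm_num
  have key : ∀ η : Fin (k + 1) → ℝ, (∑ i, η i) = 0 →
      (∑ i, ∑ j, (∑ t, |x i t - x j t|) * η i * η j)
        = -2 * ∑ t, (∑ i, η i * x i t)^2 := by
    intro η hs
    calc ∑ i, ∑ j, (∑ t, |x i t - x j t|) * η i * η j
        = ∑ i, ∑ j, ∑ t, (x i t - x j t)^2 * η i * η j := by
          refine Finset.sum_congr rfl fun i _ => Finset.sum_congr rfl fun j _ => ?_
          rw [habs i j, Finset.sum_mul, Finset.sum_mul]
      _ = ∑ i, ∑ t, ∑ j, (x i t - x j t)^2 * η i * η j :=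
          Finset.sum_congr rfl fun i _ => Finset.sum_comm
      _ = ∑ t, ∑ i, ∑ j, (x i t - x j t)^2 * η i * η j := Finset.sum_comm
      _ = ∑ t, -2 * (∑ i, η i * x i t)^2 :=
          Finset.sum_congr rfl fun t _ => quad_eq _ _ _ hs
      _ = -2 * ∑ t, (∑ i, η i * x i t)^2 := by rw [Finset.mul_sum]
  constructor
  · rintro ⟨η, hη, hs, hq⟩
    rw [key η hs] at hq
    have hzero : ∀ t, (∑ i, η i * x i t) = 0 := by
      intro t
      have h2 : ∑ t, (∑ i, η i * x i t)^2 = 0 := by linarith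
      have := (Finset.sum_eq_zero_iff_of_nonneg
        (fun t _ => sq_nonneg (∑ i, η i * x i t))).mp h2 t (Finset.mem_univ t)
      exact pow_eq_zero_iff (by norm_num) |>.mp this
    rw [Fintype.not_linearIndependent_iff]
    refine ⟨fun i => η i.succ, ?_, ?_⟩
    · funext t
      simp only [Finset.sum_apply, Pi.smul_apply, Pi.sub_apply, smul_eq_mul, Pi.zero_apply]
      have h0 := hzero t
      rw [Fin.sum_univ_succ] at h0 hs
      have : ∑ i : Fin k, η i.succ * (x i.succ t - x 0 t)
          = (∑ i : Fin k, η i.succ * x i.succ t) - (∑ i : Fin k, η i.succ) * x 0 t := by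
        rw [Finset.sum_mul, ← Finset.sum_sub_distrib]
        exact Finset.sum_congr rfl fun i _ => by ring
      rw [this]
      have hsum : ∑ i : Fin k, η i.succ = -η 0 := by linarith
      rw [hsum]
      linarith
    · by_contra hcon
      push_neg at hcon
      apply hη
      funext i
      induction i using Fin.cases with
      | zero =>
        rw [Fin.sum_univ_succ] at hs
        have : ∑ i : Fin k, η i.succ = 0 :=
          Finset.sum_eq_zero fun i _ => hcon i
        simpa [this] using hs
      | succ i => exact hcon i
  · intro hdep
    rw [Fintype.not_linearIndependent_iff] at hdep
    obtain ⟨g, hg0, i₀, hi₀⟩ := hdep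
    set η : Fin (k + 1) → ℝ := Fin.cases (-∑ i, g i) (fun i => g i) with hηdef
    have hs : (∑ i, η i) = 0 := by
      rw [Fin.sum_univ_succ]
      simp [hηdef]
    refine ⟨η, ?_, hs, ?_⟩
    · intro h
      apply hi₀
      have := congrFun h i₀.succ
      simpa [hηdef] using this
    · rw [key η hs]
      have hzero : ∀ t, (∑ i, η i * x i t) = 0 := by
        intro t
        have hg := congrFun hg0 t
        simp only [Finset.sum_apply, Pi.smul_apply, Pi.sub_apply, smul_eq_mul,
          Pi.zero_apply] at hg
        rw [Fin.sum_univ_succ]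
        simp only [hηdef, Fin.cases_zero, Fin.cases_succ]
        have : ∑ i : Fin k, g i * x i.succ t
            = ∑ i : Fin k, (g i * (x i.succ t - x 0 t) + g i * x 0 t) :=
          Finset.sum_congr rfl fun i _ => by ring
        rw [this, Finset.sum_add_distrib, hg, ← Finset.sum_mul]
        ring
      simp [hzero]
end

section
/- Every subset S = {x_0, ..., x_k} of the Hamming cube {0,1}^n with x_1 - x_0, ..., x_k - x_0 linearly independent in ℝ^n has strict 1-negative type: for every nonzero (η_0,...,η_k) with Σ η_i = 0, one has Σ_{i,j} ‖x_i - x_j‖₁ η_i η_j < 0. -/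
theorem stmt13 (n k : ℕ) (x : Fin (k + 1) → (Fin n → ℝ))
    (hcube : ∀ i t, x i t = 0 ∨ x i t = 1)
    (hinj : Function.Injective x)
    (hli : LinearIndependent ℝ (fun i : Fin k => x i.succ - x 0)) :
    ∀ η : Fin (k + 1) → ℝ, η ≠ 0 → (∑ i, η i) = 0 →
      (∑ i, ∑ j, (∑ t, |x i t - x j t|) * η i * η j) < 0 := by
  intro η hη hsum
  set g : Fin n → ℝ := fun t => ∑ i, η i * x i t with hg
  have habs : ∀ i j (t : Fin n), |x i t - x j t| = x i t + x j t - 2 * (x i t * x j t) := by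
    intro i j t
    rcases hcube i t with h1 | h1 <;> rcases hcube j t with h2 | h2 <;>
      rw [h1, h2] <;> norm_num
  have key : (∑ i, ∑ j, (∑ t, |x i t - x j t|) * η i * η j)
      = -2 * ∑ t, (g t)^2 := by
    have e1 : ∀ (i j : Fin (k+1)), (∑ t, |x i t - x j t|) * η i * η j
        = ∑ t, ((η i * x i t) * η j + η i * (η j * x j t)
            - 2 * ((η i * x i t) * (η j * x j t))) := by
      intro i j
      rw [Finset.sum_mul, Finset.sum_mul]
      refine Finset.sum_congr rfl fun t _ => ?_
      rw [habs i j t]; ring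
    simp_rw [e1]
    have swap1 : ∀ i : Fin (k+1), (∑ j : Fin (k+1), ∑ t, ((η i * x i t) * η j + η i * (η j * x j t)
        - 2 * ((η i * x i t) * (η j * x j t))))
        = ∑ t, ∑ j : Fin (k+1), ((η i * x i t) * η j + η i * (η j * x j t)
        - 2 * ((η i * x i t) * (η j * x j t))) := fun i => Finset.sum_comm
    simp_rw [swap1]
    rw [Finset.sum_comm, Finset.mul_sum]
    refine Finset.sum_congr rfl fun t _ => ?_
    have inner : ∀ i, (∑ j, ((η i * x i t) * η j + η i * (η j * x j t)
        - 2 * ((η i * x i t) * (η j * x j t)))) = (η i - 2 * (η i * x i t)) * g t := by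
      intro i
      calc (∑ j, ((η i * x i t) * η j + η i * (η j * x j t)
              - 2 * ((η i * x i t) * (η j * x j t))))
          = ∑ j, ((η i * x i t) * η j + (η i - 2 * (η i * x i t)) * (η j * x j t)) :=
            Finset.sum_congr rfl fun j _ => by ring
        _ = (η i * x i t) * (∑ j, η j) + (η i - 2 * (η i * x i t)) * (∑ j, η j * x j t) := by
            rw [Finset.sum_add_distrib, ← Finset.mul_sum, ← Finset.mul_sum]
        _ = (η i - 2 * (η i * x i t)) * g t := by rw [hsum]; ring
    simp_rw [inner]
    calc (∑ i, (η i - 2 * (η i * x i t)) * g t)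
        = (∑ i, (η i - 2 * (η i * x i t))) * g t := by rw [Finset.sum_mul]
      _ = ((∑ i, η i) - 2 * ∑ i, η i * x i t) * g t := by
          rw [Finset.sum_sub_distrib, ← Finset.mul_sum]
      _ = -2 * (g t)^2 := by rw [hsum]; ring
  rw [key]
  have hne : ∃ t, g t ≠ 0 := by
    by_contra h
    push_neg at h
    have hz : ∑ i : Fin k, η i.succ • (x i.succ - x 0) = 0 := by
      funext t
      have h0 := h t
      simp only [hg] at h0
      rw [Fin.sum_univ_succ] at h0 hsum
      simp only [Finset.sum_apply, Pi.smul_apply, Pi.sub_apply, Pi.zero_apply, smul_eq_mul]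
      have : ∑ i : Fin k, η i.succ * (x i.succ t - x 0 t)
          = ∑ i : Fin k, η i.succ * x i.succ t - (∑ i : Fin k, η i.succ) * x 0 t := by
        rw [Finset.sum_mul, ← Finset.sum_sub_distrib]
        exact Finset.sum_congr rfl fun i _ => by ring
      rw [this]
      have hs : (∑ i : Fin k, η i.succ) = -η 0 := by linarith
      rw [hs]; nlinarith [h0]
    have hzero := linearIndependent_iff'.mp hli Finset.univ (fun i => η i.succ) hz
    apply hη
    funext i
    rcases Fin.eq_zero_or_eq_succ i with h0 | ⟨j, rfl⟩
    · rw [Fin.sum_univ_succ] at hsum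
      have : ∀ j : Fin k, η j.succ = 0 := fun j => hzero j (Finset.mem_univ _)
      simp [this] at hsum
      simp [h0, hsum]
    · exact hzero j (Finset.mem_univ _)
  obtain ⟨t0, ht0⟩ := hne
  have hpos : 0 < ∑ t, (g t)^2 :=
    Finset.sum_pos' (fun t _ => sq_nonneg _) ⟨t0, Finset.mem_univ _, by positivity⟩
  linarith
end

section
/- If S ⊆ {0,1}^n has cardinality at least n+2, then S does not have strict 1-negative type: there exists a nonzero real-valued function η on S with Σ_{x ∈ S} η(x) = 0 and Σ_{x,y ∈ S} ‖x - y‖₁ η(x) η(y) = 0. -/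
theorem stmt14 (n : ℕ) (S : Finset (Fin n → ℝ))
    (hcube : ∀ x ∈ S, ∀ t, x t = 0 ∨ x t = 1)
    (hcard : n + 2 ≤ S.card) :
    ∃ η : (Fin n → ℝ) → ℝ, (∃ x ∈ S, η x ≠ 0) ∧
      (∑ x ∈ S, η x) = 0 ∧
      (∑ x ∈ S, ∑ y ∈ S, (∑ t, |x t - y t|) * η x * η y) = 0 := by
  classical
  set w : S → (Fin (n + 1) → ℝ) :=
    fun x => Fin.cons 1 (fun t => (x : Fin n → ℝ) t) with hw
  have hnotli : ¬ LinearIndependent ℝ w := by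
    intro h
    have h1 := h.fintype_card_le_finrank
    have h2 : Module.finrank ℝ (Fin (n + 1) → ℝ) = n + 1 := by
      simp [Module.finrank_pi]
    have hc : Fintype.card S = S.card := Fintype.card_coe S
    omega
  rw [Fintype.not_linearIndependent_iff] at hnotli
  obtain ⟨g, hg, i0, hi0⟩ := hnotli
  set η : (Fin n → ℝ) → ℝ := fun x => if h : x ∈ S then g ⟨x, h⟩ else 0 with hη
  have hηS : ∀ x : S, η (x : Fin n → ℝ) = g x := fun x => by simp [hη, x.2]
  have hA : (∑ x ∈ S, η x) = 0 := by
    have h0 := congrFun hg 0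
    simp only [Finset.sum_apply, Pi.smul_apply, Pi.zero_apply, hw, Fin.cons_zero,
      smul_eq_mul, mul_one] at h0
    rw [← Finset.sum_coe_sort S η]
    simpa [hηS] using h0
  have hB : ∀ t, (∑ x ∈ S, x t * η x) = 0 := by
    intro t
    have h0 := congrFun hg t.succ
    simp only [Finset.sum_apply, Pi.smul_apply, Pi.zero_apply, hw, Fin.cons_succ,
      smul_eq_mul] at h0
    rw [← Finset.sum_coe_sort S (fun x => x t * η x)]
    have : ∀ x : S, (x : Fin n → ℝ) t * η (x : Fin n → ℝ) = g x * (x : Fin n → ℝ) t := by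
      intro x; rw [hηS]; ring
    rw [Finset.sum_congr rfl (fun x _ => this x)]
    exact h0
  have habs : ∀ x ∈ S, ∀ y ∈ S, ∀ t, |x t - y t| = x t + y t - 2 * (x t * y t) := by
    intro x hx y hy t
    rcases hcube x hx t with h1 | h1 <;> rcases hcube y hy t with h2 | h2 <;>
      rw [h1, h2] <;> norm_num
  refine ⟨η, ⟨i0, i0.2, by rw [hηS]; exact hi0⟩, hA, ?_⟩
  apply Finset.sum_eq_zero
  intro x hx
  have hstep : ∀ y ∈ S, (∑ t, |x t - y t|) * η x * η y
      = ∑ t, (x t * η x * η y + η x * (y t * η y) - 2 * x t * η x * (y t * η y)) := by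
    intro y hy
    rw [Finset.sum_mul, Finset.sum_mul]
    refine Finset.sum_congr rfl fun t _ => ?_
    rw [habs x hx y hy t]; ring
  rw [Finset.sum_congr rfl hstep, Finset.sum_comm]
  apply Finset.sum_eq_zero
  intro t _
  rw [Finset.sum_sub_distrib, Finset.sum_add_distrib, ← Finset.mul_sum, ← Finset.mul_sum,
    ← Finset.mul_sum, hA, hB t]
  ring
end

section
/- If a finite metric tree with k vertices (with the graph path metric) embeds isometrically into the Hamming cube {0,1}^n with the ℓ¹ metric, then n ≥ k - 1. -/
open SimpleGraph Finset

namespace Stmt15Aux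

lemma list_sum_eq_zero {l : List ℝ} (h0 : ∀ x ∈ l, 0 ≤ x) (hs : l.sum = 0) :
    ∀ x ∈ l, x = 0 := by
  induction l with
  | nil => simp
  | cons a l ih =>
    simp only [List.sum_cons] at hs
    have ha : 0 ≤ a := h0 a (by simp)
    have hl : 0 ≤ l.sum := List.sum_nonneg (fun x hx => h0 x (by simp [hx]))
    have ha0 : a = 0 := by linarith
    have hl0 : l.sum = 0 := by linarith
    intro x hx
    rcases List.mem_cons.mp hx with h | h
    · exact h ▸ ha0
    · exact ih (fun x hx => h0 x (by simp [hx])) hl0 x h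

variable {k n : ℕ} {T : SimpleGraph (Fin k)} {f : Fin k → (Fin n → ℝ)}

lemma walk_coord_le (f : Fin k → (Fin n → ℝ)) (t : Fin n) {u v : Fin k} (p : T.Walk u v) :
    |f u t - f v t| ≤ (p.darts.map (fun d => |f d.fst t - f d.snd t|)).sum := by
  induction p with
  | nil => simp
  | @cons u w v h p ih =>
    rw [SimpleGraph.Walk.darts_cons, List.map_cons, List.sum_cons]
    calc |f u t - f v t| ≤ |f u t - f w t| + |f w t - f v t| := abs_sub_le _ _ _
    _ ≤ |f u t - f w t| + (p.darts.map (fun d => |f d.fst t - f d.snd t|)).sum :=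
        add_le_add le_rfl ih

lemma exists_geodesic_no_flip (hT : T.IsTree)
    (hiso : ∀ u v : Fin k, (∑ t, |f u t - f v t|) = (T.dist u v : ℝ))
    (u v : Fin k) :
    ∃ p : T.Walk u v, ∀ t, f u t = f v t → ∀ d ∈ p.darts, f d.fst t = f d.snd t := by
  obtain ⟨p, hp⟩ := hT.isConnected.exists_walk_length_eq_dist u v
  refine ⟨p, ?_⟩
  have hswap : ∀ (l : List T.Dart),
      ∑ t, (l.map (fun d => |f d.fst t - f d.snd t|)).sum
        = (l.map (fun d => ∑ t, |f d.fst t - f d.snd t|)).sum := by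
    intro l
    induction l with
    | nil => simp
    | cons a l ih => simp [Finset.sum_add_distrib, ih]
  have hone : ∀ d ∈ p.darts, (∑ t, |f d.fst t - f d.snd t|) = (1 : ℝ) := by
    intro d _
    rw [hiso]
    rw [(SimpleGraph.dist_eq_one_iff_adj).mpr d.adj]
    norm_num
  have hlen : ∑ t, (p.darts.map (fun d => |f d.fst t - f d.snd t|)).sum = (p.length : ℝ) := by
    rw [hswap, List.map_congr_left hone]
    simp [SimpleGraph.Walk.length_darts]
  have hsum : ∑ t, |f u t - f v t|
      = ∑ t, (p.darts.map (fun d => |f d.fst t - f d.snd t|)).sum := by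
    rw [hiso, hlen, hp]
  have heq : ∀ t, |f u t - f v t|
      = (p.darts.map (fun d => |f d.fst t - f d.snd t|)).sum := by
    intro t
    have := (Finset.sum_eq_sum_iff_of_le
      (fun i (_ : i ∈ (univ : Finset (Fin n))) => walk_coord_le f i p)).mp hsum
    exact this t (mem_univ t)
  intro t huv d hd
  have h0 : (p.darts.map (fun d => |f d.fst t - f d.snd t|)).sum = 0 := by
    rw [← heq t, huv, sub_self, abs_zero]
  have := list_sum_eq_zero (l := p.darts.map (fun d => |f d.fst t - f d.snd t|))
    (by intro x hx; obtain ⟨d', _, rfl⟩ := List.mem_map.mp hx; exact abs_nonneg _) h0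
    _ (List.mem_map_of_mem hd)
  have := abs_eq_zero.mp this
  linarith [this]

lemma flip_card_one (hcube : ∀ v t, f v t = 0 ∨ f v t = 1)
    (hiso : ∀ u v : Fin k, (∑ t, |f u t - f v t|) = (T.dist u v : ℝ))
    {u v : Fin k} (h : T.Adj u v) :
    (univ.filter (fun t => f u t ≠ f v t)).card = 1 := by
  classical
  have habs : ∀ t, |f u t - f v t| = if f u t ≠ f v t then (1:ℝ) else 0 := by
    intro t
    rcases hcube u t with h1 | h1 <;> rcases hcube v t with h2 | h2 <;>
      simp [h1, h2]
  have hd : (T.dist u v : ℝ) = 1 := by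
    rw [(SimpleGraph.dist_eq_one_iff_adj).mpr h]; norm_num
  have hsum : (∑ t, if f u t ≠ f v t then (1:ℝ) else 0) = 1 := by
    rw [← Finset.sum_congr rfl (fun t _ => habs t), hiso, hd]
  rw [Finset.sum_boole] at hsum
  exact_mod_cast hsum

lemma not_two_edges (hT : T.IsTree)
    (hcube : ∀ v t, f v t = 0 ∨ f v t = 1)
    (hiso : ∀ u v : Fin k, (∑ t, |f u t - f v t|) = (T.dist u v : ℝ))
    {a b c d : Fin k} {t : Fin n}
    (hab : T.Adj a b) (hcd : T.Adj c d)
    (hfa : f a t ≠ f b t) (hfc : f c t ≠ f d t) (hac : f a t = f c t) :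
    s(a,b) = s(c,d) := by
  by_contra hne
  have hbd : f b t = f d t := by
    rcases hcube a t with h1|h1 <;> rcases hcube b t with h2|h2 <;>
      rcases hcube c t with h3|h3 <;> rcases hcube d t with h4|h4 <;> simp_all
  obtain ⟨P, hP⟩ := exists_geodesic_no_flip hT hiso a c
  obtain ⟨Q, hQ⟩ := exists_geodesic_no_flip hT hiso d b
  have hPd := hP t hac
  have hQd := hQ t hbd.symm
  set W : T.Walk a b := P.append (SimpleGraph.Walk.cons hcd Q) with hW
  have hbridge : s(a,b) ∈ W.edges := by
    have hB := (SimpleGraph.isAcyclic_iff_forall_edge_isBridge.mp hT.IsAcyclic) (T.mem_edgeSet.mpr hab)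
    exact ((SimpleGraph.isBridge_iff_adj_and_forall_walk_mem_edges.mp hB) W)
  rw [hW, SimpleGraph.Walk.edges_append, SimpleGraph.Walk.edges_cons] at hbridge
  have key : ∀ (x y : Fin k) (R : T.Walk x y),
      (∀ d ∈ R.darts, f d.fst t = f d.snd t) → s(a,b) ∉ R.edges := by
    intro x y R hR hmem
    have hmem' : s(a,b) ∈ R.darts.map SimpleGraph.Dart.edge := hmem
    obtain ⟨dd, hdd, hedge⟩ := List.mem_map.mp hmem'
    have heq : s(dd.fst, dd.snd) = s(a,b) := hedge
    have hflip := hR dd hdd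
    rcases Sym2.eq_iff.mp heq with ⟨h1, h2⟩ | ⟨h1, h2⟩
    · exact hfa (h1 ▸ h2 ▸ hflip)
    · exact hfa (h1 ▸ h2 ▸ hflip).symm
  rcases List.mem_append.mp hbridge with h | h
  · exact key _ _ P hPd h
  · rcases List.mem_cons.mp h with h | h
    · exact hne h
    · exact key _ _ Q hQd h

end Stmt15Aux

open Stmt15Aux in
theorem stmt15 (k n : ℕ) (T : SimpleGraph (Fin k)) (hT : T.IsTree)
    (f : Fin k → (Fin n → ℝ))
    (hcube : ∀ v t, f v t = 0 ∨ f v t = 1)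
    (hiso : ∀ u v : Fin k, (∑ t, |f u t - f v t|) = (T.dist u v : ℝ)) :
    k - 1 ≤ n := by
  classical
  have hcard := hT.card_edgeFinset
  rw [Fintype.card_fin] at hcard
  let φ : Sym2 (Fin k) → Finset (Fin n) :=
    Sym2.lift ⟨fun u v => univ.filter (fun t => f u t ≠ f v t), by
      intro u v
      ext s
      simp only [mem_filter, mem_univ, true_and]
      exact ⟨Ne.symm, Ne.symm⟩⟩
  have hφ : ∀ u v : Fin k, φ s(u,v) = univ.filter (fun t => f u t ≠ f v t) := fun _ _ => rfl
  have hφcard : ∀ e ∈ T.edgeFinset, (φ e).card = 1 := by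
    intro e he
    induction e using Sym2.ind with
    | _ u v =>
      rw [hφ]
      exact flip_card_one hcube hiso (by simpa using he)
  have hinj : Set.InjOn φ T.edgeFinset := by
    intro e he e' he' hee
    have he2 : e ∈ T.edgeFinset := he
    have he2' : e' ∈ T.edgeFinset := he'
    induction e using Sym2.ind with
    | _ a b =>
    induction e' using Sym2.ind with
    | _ c d =>
      have hab : T.Adj a b := by simpa using he2
      have hcd : T.Adj c d := by simpa using he2'
      obtain ⟨t, ht⟩ := Finset.card_eq_one.mp (hφcard _ he2)
      have ht' : φ s(c,d) = {t} := by rw [← hee, ht]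
      have h1 : t ∈ univ.filter (fun s => f a s ≠ f b s) := by
        rw [← hφ, ht]; exact mem_singleton_self t
      have h2 : t ∈ univ.filter (fun s => f c s ≠ f d s) := by
        rw [← hφ, ht']; exact mem_singleton_self t
      have hfa : f a t ≠ f b t := (mem_filter.mp h1).2
      have hfc : f c t ≠ f d t := (mem_filter.mp h2).2
      by_cases hac : f a t = f c t
      · exact not_two_edges hT hcube hiso hab hcd hfa hfc hac
      · have had : f a t = f d t := by
          rcases hcube a t with g1|g1 <;> rcases hcube c t with g3|g3 <;>
            rcases hcube d t with g4|g4 <;> simp_all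
        have := not_two_edges hT hcube hiso hab hcd.symm hfa (Ne.symm hfc) had
        rw [this, Sym2.eq_swap]
  have hmaps : ∀ e ∈ T.edgeFinset, φ e ∈
      (univ : Finset (Fin n)).image (fun t => ({t} : Finset (Fin n))) := by
    intro e he
    obtain ⟨t, ht⟩ := Finset.card_eq_one.mp (hφcard e he)
    exact mem_image.mpr ⟨t, mem_univ t, ht.symm⟩
  have h1 : T.edgeFinset.card ≤
      ((univ : Finset (Fin n)).image (fun t => ({t} : Finset (Fin n)))).card :=
    Finset.card_le_card_of_injOn φ hmaps hinj
  have h2 : ((univ : Finset (Fin n)).image (fun t => ({t} : Finset (Fin n)))).card ≤ n := by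
    calc _ ≤ (univ : Finset (Fin n)).card := Finset.card_image_le
    _ = n := by simp
  omega
end
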